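/- arXiv:1705.01420 — 2 statements merged into one kernel-verified Lean document; each statement's English description precedes it below -/
import Mathlib

section
/- Let (X, 𝓑, μ) be a probability space, let T₁, T₂ : X → X be commuting invertible measure-preserving transformations such that T₂ ∘ T₁^{-1} is ergodic, and let f₁, f₂ ∈ L^∞(X, 𝓑, μ). If (N_k) is a strictly increasing sequence of positive integers and c ∈ ℝ is a constant such that (1/N_k) ∑_{n=0}^{N_k−1} f₁(T₁ⁿ x) f₂(T₂ⁿ x) → c for μ-almost every x ∈ X, then c = (∫ f₁ dμ)(∫ f₂ dμ). -/
open MeasureTheory Filter Finset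

open scoped ENNReal Topology

/-!
Write `S = T₂ ∘ T₁⁻¹`. Since `T₁ⁿ` preserves `μ` and commutes with `T₂`, the substitution
`x ↦ T₁⁻ⁿ x` turns `∫ f₁ ∘ T₁ⁿ · f₂ ∘ T₂ⁿ dμ` into the correlation `∫ f₁ · f₂ ∘ Sⁿ dμ`. Integrating
the a.e. convergent, uniformly bounded averages (dominated convergence) shows that `c` is the limit
along `N_k` of the Cesàro means of these correlations. By von Neumann's mean ergodic theorem for
the Koopman operator of `S` on `L²`, those Cesàro means converge to `⟪f₁, P f₂⟫`, where `P` is the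
orthogonal projection onto the `S`-invariant functions; ergodicity makes these the constants, so
`P f₂ = ∫ f₂` and the limit is `(∫ f₁)(∫ f₂)`.
-/

lemma abs_cesaro_le {a : ℕ → ℝ} {C : ℝ} (ha : ∀ n, |a n| ≤ C) (N : ℕ) :
    |(N : ℝ)⁻¹ * ∑ n ∈ range N, a n| ≤ C := by
  rcases N.eq_zero_or_pos with rfl | hN
  · simpa using (abs_nonneg (a 0)).trans (ha 0)
  calc |(N : ℝ)⁻¹ * ∑ n ∈ range N, a n| ≤ (N : ℝ)⁻¹ * ∑ _n ∈ range N, C := by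
        rw [abs_mul, abs_of_nonneg (by positivity)]
        gcongr
        exact (abs_sum_le_sum_abs _ _).trans (sum_le_sum fun n _ => ha n)
    _ = C := by
        rw [sum_const, card_range, nsmul_eq_mul, ← mul_assoc, inv_mul_cancel₀ (by positivity),
          one_mul]

namespace MeasureTheory

variable {X : Type*} [MeasurableSpace X] {μ : Measure X}

lemma MemLp.exists_ae_abs_le {f : X → ℝ} (hf : MemLp f ⊤ μ) : ∃ C, ∀ᵐ x ∂μ, |f x| ≤ C := by
  have hfin : eLpNormEssSup f μ < ⊤ := eLpNorm_exponent_top (f := f) ▸ hf.eLpNorm_lt_top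
  obtain ⟨C, hC⟩ := eLpNormEssSup_lt_top_iff_isBoundedUnder.mp hfin
  refine ⟨C, (eventually_map.mp hC).mono fun x hx => ?_⟩
  rw [← Real.norm_eq_abs, ← coe_nnnorm]
  exact_mod_cast hx

lemma tendsto_cesaro_integral_of_ae_tendsto [IsProbabilityMeasure μ] {φ : ℕ → X → ℝ} {C : ℝ}
    (hφ : ∀ n, AEStronglyMeasurable (φ n) μ) (hφC : ∀ᵐ x ∂μ, ∀ n, |φ n x| ≤ C) {N : ℕ → ℕ}
    {c : ℝ} (hc : ∀ᵐ x ∂μ,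
      Tendsto (fun k => (N k : ℝ)⁻¹ * ∑ n ∈ range (N k), φ n x) atTop (𝓝 c)) :
    Tendsto (fun k => (N k : ℝ)⁻¹ * ∑ n ∈ range (N k), ∫ x, φ n x ∂μ) atTop (𝓝 c) := by
  have hint : ∀ n, Integrable (φ n) μ := fun n =>
    (integrable_const C).mono' (hφ n) (hφC.mono fun x hx => hx n)
  have hDCT := tendsto_integral_of_dominated_convergence (fun _ => C)
    (fun k => (aestronglyMeasurable_fun_sum (range (N k)) fun n _ => hφ n).const_mul _)
    (integrable_const C) (fun k => hφC.mono fun x hx => abs_cesaro_le hx (N k)) hc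
  simpa only [integral_const_mul, integral_finsetSum _ fun n _ => hint n, integral_const,
    probReal_univ, one_smul] using hDCT

lemma MeasurePreserving.integral_comp_iterate {E : Type*} [NormedAddCommGroup E]
    [NormedSpace ℝ E] {T : X ≃ᵐ X} (hT : MeasurePreserving T μ μ) (g : X → E) (n : ℕ) :
    ∫ x, g (T^[n] x) ∂μ = ∫ x, g x ∂μ := by
  induction n with
  | zero => rfl
  | succ n ih =>
    simp only [Function.iterate_succ_apply]
    rw [hT.integral_comp' (fun x => g (T^[n] x)), ih]

lemma MeasurableEquiv.iterate_comp_symm_iterate {T₁ T₂ : X ≃ᵐ X}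
    (hcomm : ∀ x, T₁ (T₂ x) = T₂ (T₁ x)) (n : ℕ) (x : X) :
    (T₂ ∘ T₁.symm)^[n] (T₁^[n] x) = T₂^[n] x := by
  have hcomm' : Function.Commute T₂ T₁.symm := fun x => T₁.injective (by simp [hcomm])
  rw [hcomm'.comp_iterate, Function.comp_apply,
    (Function.LeftInverse.iterate T₁.symm_apply_apply n) x]

lemma integral_mul_comp_iterate_eq {T₁ T₂ : X ≃ᵐ X} (hT₁ : MeasurePreserving T₁ μ μ)
    (hcomm : ∀ x, T₁ (T₂ x) = T₂ (T₁ x)) (f₁ f₂ : X → ℝ) (n : ℕ) :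
    ∫ x, f₁ (T₁^[n] x) * f₂ (T₂^[n] x) ∂μ = ∫ x, f₁ x * f₂ ((T₂ ∘ T₁.symm)^[n] x) ∂μ := by
  rw [← hT₁.integral_comp_iterate (fun y => f₁ y * f₂ ((T₂ ∘ T₁.symm)^[n] y)) n]
  simp only [MeasurableEquiv.iterate_comp_symm_iterate hcomm]

lemma Lp.integral_const {E : Type*} [NormedAddCommGroup E] [NormedSpace ℝ E] [CompleteSpace E]
    {p : ℝ≥0∞} [IsFiniteMeasure μ] (c : E) : ∫ x, Lp.const p μ c x ∂μ = μ.real Set.univ • c := by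
  rw [integral_congr_ae (Lp.coeFn_const p μ (c := c))]
  exact MeasureTheory.integral_const c

lemma L2.inner_const_left [IsFiniteMeasure μ] (c : ℝ) (g : Lp ℝ 2 μ) :
    inner ℝ (Lp.const 2 μ c) g = c * ∫ x, g x ∂μ := by
  rw [← indicatorConstLp_univ, L2.inner_indicatorConstLp_eq_inner_setIntegral, setIntegral_univ,
    Real.inner_apply]

variable {S : X → X}

noncomputable abbrev koopman (hS : MeasurePreserving S μ μ) : Lp ℝ 2 μ →L[ℝ] Lp ℝ 2 μ :=
  (Lp.compMeasurePreservingₗᵢ ℝ S hS).toContinuousLinearMap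

lemma koopman_iterate_apply (hS : MeasurePreserving S μ μ) (k : ℕ) (g : Lp ℝ 2 μ) :
    (koopman hS)^[k] g = Lp.compMeasurePreserving S^[k] (hS.iterate k) g :=
  congrFun (Lp.compMeasurePreserving_iterate hS k) g

lemma inner_toLp_koopman_iterate_toLp (hS : MeasurePreserving S μ μ) {f g : X → ℝ}
    (hf : MemLp f 2 μ) (hg : MemLp g 2 μ) (k : ℕ) :
    inner ℝ (hf.toLp f) ((koopman hS)^[k] (hg.toLp g)) = ∫ x, f x * g (S^[k] x) ∂μ := by
  rw [koopman_iterate_apply, Lp.toLp_compMeasurePreserving, L2.inner_def]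
  refine integral_congr_ae ?_
  filter_upwards [hf.coeFn_toLp, (hg.comp_measurePreserving (hS.iterate k)).coeFn_toLp]
    with x hfx hgx
  simp [hfx, hgx, mul_comm]

lemma koopman_const [IsFiniteMeasure μ] (hS : MeasurePreserving S μ μ) (c : ℝ) :
    koopman hS (Lp.const 2 μ c) = Lp.const 2 μ c := by
  ext1
  refine (Lp.coeFn_compMeasurePreserving _ hS).trans ?_
  exact (hS.quasiMeasurePreserving.ae_eq (Lp.coeFn_const 2 μ (c := c))).trans
    (Lp.coeFn_const 2 μ (c := c)).symm

lemma Ergodic.exists_eq_const_of_koopman_apply_eq [IsFiniteMeasure μ] (h : Ergodic S μ)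
    {y : Lp ℝ 2 μ} (hy : koopman h.toMeasurePreserving y = y) : ∃ c : ℝ, y = Lp.const 2 μ c := by
  obtain ⟨c, hc⟩ := h.eq_const_of_compMeasurePreserving_eq (congrArg Subtype.val hy)
  exact ⟨c, Subtype.ext hc⟩

lemma Ergodic.orthogonalProjectionOnto_eqLocus_koopman [IsProbabilityMeasure μ] (h : Ergodic S μ)
    (g : Lp ℝ 2 μ) :
    ((koopman h.toMeasurePreserving).eqLocus
        (1 : Lp ℝ 2 μ →L[ℝ] Lp ℝ 2 μ)).orthogonalProjectionOnto g =
      Lp.const 2 μ (∫ x, g x ∂μ) := by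
  set K := (koopman h.toMeasurePreserving).eqLocus (1 : Lp ℝ 2 μ →L[ℝ] Lp ℝ 2 μ)
  obtain ⟨c, hc⟩ := h.exists_eq_const_of_koopman_apply_eq (K.orthogonalProjectionOnto g).2
  have hone : Lp.const 2 μ (1 : ℝ) ∈ K := koopman_const _ 1
  have hinner := Submodule.inner_orthogonalProjectionOnto_eq_of_mem_left (⟨_, hone⟩ : K) g
  rw [Submodule.coe_inner, L2.inner_const_left, L2.inner_const_left, hc, Lp.integral_const,
    probReal_univ, one_smul, one_mul, one_mul] at hinner
  rw [hc, hinner]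

theorem Ergodic.tendsto_cesaro_integral_mul_comp_iterate [IsProbabilityMeasure μ]
    (h : Ergodic S μ) {f g : X → ℝ} (hf : MemLp f 2 μ) (hg : MemLp g 2 μ) :
    Tendsto (fun n : ℕ => (n : ℝ)⁻¹ * ∑ k ∈ range n, ∫ x, f x * g (S^[k] x) ∂μ) atTop
      (𝓝 ((∫ x, f x ∂μ) * ∫ x, g x ∂μ)) := by
  have hvN := (koopman h.toMeasurePreserving).tendsto_birkhoffAverage_orthogonalProjection
    (LinearIsometry.norm_toContinuousLinearMap_le _) (hg.toLp g)
  rw [h.orthogonalProjectionOnto_eqLocus_koopman] at hvN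
  have hlim := (tendsto_const_nhds (x := hf.toLp f)).inner (𝕜 := ℝ) hvN
  rw [real_inner_comm, L2.inner_const_left, integral_congr_ae hf.coeFn_toLp,
    integral_congr_ae hg.coeFn_toLp, mul_comm] at hlim
  refine hlim.congr fun n => ?_
  simp only [birkhoffAverage, birkhoffSum, id, inner_smul_right, inner_sum,
    inner_toLp_koopman_iterate_toLp]

end MeasureTheory

theorem subsequential_limit_eq_prod_integrals_two_general
    {X : Type*} [MeasurableSpace X] (μ : Measure X) [IsProbabilityMeasure μ]
    (T₁ T₂ : X ≃ᵐ X)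
    (hT₁ : MeasurePreserving T₁ μ μ) (hT₂ : MeasurePreserving T₂ μ μ)
    (hcomm : ∀ x, T₁ (T₂ x) = T₂ (T₁ x))
    (herg : Ergodic (⇑T₂ ∘ ⇑T₁.symm) μ)
    (f₁ f₂ : X → ℝ) (hf₁ : MemLp f₁ ⊤ μ) (hf₂ : MemLp f₂ ⊤ μ)
    (N : ℕ → ℕ) (hN : StrictMono N) (c : ℝ)
    (hconv : ∀ᵐ x ∂μ,
      Tendsto
        (fun k : ℕ =>
          (N k : ℝ)⁻¹ * ∑ n ∈ Finset.range (N k), f₁ ((⇑T₁)^[n] x) * f₂ ((⇑T₂)^[n] x))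
        atTop (nhds c)) :
    c = (∫ x, f₁ x ∂μ) * ∫ x, f₂ x ∂μ := by
  obtain ⟨C₁, hC₁⟩ := hf₁.exists_ae_abs_le
  obtain ⟨C₂, hC₂⟩ := hf₂.exists_ae_abs_le
  have hbound : ∀ᵐ x ∂μ, ∀ n, |f₁ (T₁^[n] x) * f₂ (T₂^[n] x)| ≤ C₁ * C₂ := by
    refine ae_all_iff.mpr fun n => ?_
    filter_upwards [(hT₁.iterate n).quasiMeasurePreserving.ae hC₁,
      (hT₂.iterate n).quasiMeasurePreserving.ae hC₂] with x h₁ h₂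
    rw [abs_mul]
    exact mul_le_mul h₁ h₂ (abs_nonneg _) ((abs_nonneg _).trans h₁)
  have hmeas : ∀ n, AEStronglyMeasurable (fun x => f₁ (T₁^[n] x) * f₂ (T₂^[n] x)) μ := fun n =>
    (hf₁.1.comp_quasiMeasurePreserving (hT₁.iterate n).quasiMeasurePreserving).mul
      (hf₂.1.comp_quasiMeasurePreserving (hT₂.iterate n).quasiMeasurePreserving)
  have hlim := tendsto_cesaro_integral_of_ae_tendsto hmeas hbound hconv
  simp only [integral_mul_comp_iterate_eq hT₁ hcomm] at hlim
  exact tendsto_nhds_unique hlim <|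
    (herg.tendsto_cesaro_integral_mul_comp_iterate (hf₁.mono_exponent le_top)
      (hf₂.mono_exponent le_top)).comp hN.tendsto_atTop

/-- If `T₁, T₂` are commuting invertible measure-preserving transformations of a probability
space with `T₂ ∘ T₁⁻¹` ergodic, and the nonconventional averages of `f₁, f₂ ∈ L^∞` converge
a.e. along a subsequence to a constant `c`, then `c = (∫ f₁ dμ)(∫ f₂ dμ)`. -/
theorem subsequential_limit_eq_prod_integrals_two
    {X : Type*} [MeasurableSpace X] (μ : Measure X) [IsProbabilityMeasure μ]
    (T₁ T₂ : X ≃ᵐ X)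
    (hT₁ : MeasurePreserving T₁ μ μ) (hT₂ : MeasurePreserving T₂ μ μ)
    (hcomm : ∀ x, T₁ (T₂ x) = T₂ (T₁ x))
    (herg : Ergodic (⇑T₂ ∘ ⇑T₁.symm) μ)
    (f₁ f₂ : X → ℝ) (hf₁ : MemLp f₁ ⊤ μ) (hf₂ : MemLp f₂ ⊤ μ)
    (N : ℕ → ℕ) (hN : StrictMono N) (hNpos : ∀ k, 0 < N k) (c : ℝ)
    (hconv : ∀ᵐ x ∂μ,
      Tendsto
        (fun k : ℕ =>
          (N k : ℝ)⁻¹ * ∑ n ∈ Finset.range (N k), f₁ ((⇑T₁)^[n] x) * f₂ ((⇑T₂)^[n] x))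
        atTop (nhds c)) :
    c = (∫ x, f₁ x ∂μ) * ∫ x, f₂ x ∂μ :=
  subsequential_limit_eq_prod_integrals_two_general μ T₁ T₂ hT₁ hT₂ hcomm herg f₁ f₂ hf₁ hf₂ N hN c
    hconv
end

section
/- Let (X, 𝓑, μ) be a probability space, let T₁, T₂ : X → X be commuting invertible measure-preserving transformations such that S = T₂ ∘ T₁^{-1} is ergodic, and let f₁, f₂ ∈ L^∞(X, 𝓑, μ). Then lim_{N→∞} (1/N) ∑_{n=0}^{N−1} ∫_X f₁(T₁ⁿ x) f₂(T₂ⁿ x) dμ(x) = (∫ f₁ dμ)(∫ f₂ dμ). -/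
/-!
Put `S = T₂ ∘ T₁⁻¹`. Since `S` commutes with `T₁` and `S ∘ T₁ = T₂`, we have `T₂ⁿ = Sⁿ ∘ T₁ⁿ`,
and as `T₁` preserves `μ` the `n`-th correlation equals `∫ f₁ · (f₂ ∘ Sⁿ) = ⟪f₁, Uⁿ f₂⟫`, where
`U g = g ∘ S` is the Koopman isometry of `L²(μ)`. By von Neumann's mean ergodic theorem the Cesàro
averages of `Uⁿ f₂` converge in `L²` to the orthogonal projection of `f₂` onto the `U`-invariant
functions. By ergodicity of `S` these are the constants, so the limit is the constant `∫ f₂`,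
and pairing with `f₁` gives `(∫ f₁)(∫ f₂)`.
-/

open MeasureTheory Filter Finset

theorem MeasurableEmbedding.iterate {α : Type*} [MeasurableSpace α] {f : α → α}
    (hf : MeasurableEmbedding f) : ∀ n, MeasurableEmbedding f^[n]
  | 0 => .id
  | n + 1 => (hf.iterate n).comp hf

theorem Equiv.iterate_comp_symm_iterate {α : Type*} {e₁ e₂ : α ≃ α}
    (h : Function.Commute e₁ e₂) (n : ℕ) (x : α) :
    (e₂ ∘ e₁.symm)^[n] (e₁^[n] x) = e₂^[n] x := by
  have hcomm : Function.Commute (e₂ ∘ e₁.symm) e₁ := fun y => by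
    simp only [Function.comp_apply, e₁.symm_apply_apply]
    rw [h, e₁.apply_symm_apply]
  have hcomp : (e₂ ∘ e₁.symm) ∘ e₁ = e₂ := by ext; simp
  rw [← Function.comp_apply (f := (e₂ ∘ e₁.symm)^[n]), ← hcomm.comp_iterate, hcomp]

namespace MeasureTheory

variable {X : Type*} [MeasurableSpace X] {μ : Measure X}

theorem L2.inner_const_right [IsFiniteMeasure μ] (F : Lp ℝ 2 μ) (c : ℝ) :
    inner ℝ F (Lp.const 2 μ c) = (∫ x, F x ∂μ) * c := by
  rw [L2.inner_def, ← integral_mul_const]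
  refine integral_congr_ae ?_
  filter_upwards [Lp.coeFn_const (p := 2) (μ := μ) c] with x hx
  rw [hx]
  simp [mul_comm]

theorem Lp.integral_const_s17 [IsProbabilityMeasure μ] (c : ℝ) :
    ∫ x, Lp.const 2 μ c x ∂μ = c := by
  rw [integral_congr_ae (Lp.coeFn_const (p := 2) (μ := μ) c)]
  simp

theorem Ergodic.exists_eq_Lp_const_of_compMeasurePreserving_eq {E : Type*} [NormedAddCommGroup E]
    [IsFiniteMeasure μ] {p : ENNReal} {S : X → X} (hS : Ergodic S μ) {F : Lp E p μ}
    (hF : Lp.compMeasurePreserving S hS.toMeasurePreserving F = F) :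
    ∃ c, F = Lp.const p μ c := by
  have hF' : F.1.compMeasurePreserving S hS.toMeasurePreserving = F.1 := by
    rw [← Lp.compMeasurePreserving_val, hF]
  obtain ⟨c, hc⟩ := hS.eq_const_of_compMeasurePreserving_eq hF'
  exact ⟨c, Subtype.ext hc⟩

theorem Lp.compMeasurePreserving_const [IsFiniteMeasure μ] {E : Type*} [NormedAddCommGroup E]
    {p : ENNReal} {S : X → X} (hS : MeasurePreserving S μ μ) (c : E) :
    Lp.compMeasurePreserving S hS (Lp.const p μ c) = Lp.const p μ c :=
  Lp.toLp_compMeasurePreserving (memLp_const c) hS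

variable [IsProbabilityMeasure μ] {S : X → X}

theorem Ergodic.tendsto_birkhoffAverage_compMeasurePreserving (hS : Ergodic S μ)
    (F : Lp ℝ 2 μ) :
    Tendsto (birkhoffAverage ℝ (Lp.compMeasurePreserving S hS.toMeasurePreserving) id · F)
      atTop (nhds (Lp.const 2 μ (∫ x, F x ∂μ))) := by
  set U := Lp.compMeasurePreservingₗᵢ ℝ S hS.toMeasurePreserving (E := ℝ) (p := 2)
  set W := U.toContinuousLinearMap.eqLocus (1 : Lp ℝ 2 μ →L[ℝ] Lp ℝ 2 μ)
  set P := W.starProjection F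
  have hlim : Tendsto (birkhoffAverage ℝ U id · F) atTop (nhds P) :=
    U.toContinuousLinearMap.tendsto_birkhoffAverage_orthogonalProjection
      U.norm_toContinuousLinearMap_le F
  obtain ⟨c, hc⟩ : ∃ c, P = Lp.const 2 μ c :=
    hS.exists_eq_Lp_const_of_compMeasurePreserving_eq (W.starProjection_apply_mem F)
  -- The constants lie in `W`, so `F - P` is orthogonal to `1`.
  have hcF : c = ∫ x, F x ∂μ := by
    have horth : inner ℝ (F - P) (Lp.const 2 μ 1) = 0 :=
      W.starProjection_inner_eq_zero F _ (Lp.compMeasurePreserving_const hS.toMeasurePreserving 1)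
    rw [inner_sub_left, sub_eq_zero, hc, L2.inner_const_right, L2.inner_const_right,
      Lp.integral_const_s17] at horth
    simpa using horth.symm
  rwa [hc, hcF] at hlim

theorem Ergodic.tendsto_average_integral_mul_comp_iterate (hS : Ergodic S μ) {f g : X → ℝ}
    (hf : MemLp f 2 μ) (hg : MemLp g 2 μ) :
    Tendsto (fun N : ℕ => (N : ℝ)⁻¹ * ∑ n ∈ range N, ∫ x, f x * g (S^[n] x) ∂μ)
      atTop (nhds ((∫ x, f x ∂μ) * ∫ x, g x ∂μ)) := by
  set K := Lp.compMeasurePreserving (E := ℝ) (p := 2) S hS.toMeasurePreserving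
  have hterm (n : ℕ) :
      ∫ x, f x * g (S^[n] x) ∂μ = inner ℝ (hf.toLp f) (K^[n] (hg.toLp g)) := by
    rw [Lp.compMeasurePreserving_iterate, Lp.toLp_compMeasurePreserving, L2.inner_def]
    refine integral_congr_ae ?_
    filter_upwards [hf.coeFn_toLp,
      (hg.comp_measurePreserving (hS.toMeasurePreserving.iterate n)).coeFn_toLp] with x h1 h2
    simp [h1, h2, mul_comm]
  have haverage (N : ℕ) : (N : ℝ)⁻¹ * ∑ n ∈ range N, ∫ x, f x * g (S^[n] x) ∂μ =
      inner ℝ (hf.toLp f) (birkhoffAverage ℝ K id N (hg.toLp g)) := by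
    simp only [birkhoffAverage, birkhoffSum, inner_smul_right, inner_sum, id, hterm]
  have hlim := (tendsto_const_nhds (x := hf.toLp f)).inner (𝕜 := ℝ)
    (hS.tendsto_birkhoffAverage_compMeasurePreserving (hg.toLp g))
  rw [L2.inner_const_right, integral_congr_ae hf.coeFn_toLp,
    integral_congr_ae hg.coeFn_toLp] at hlim
  simpa only [haverage] using hlim

end MeasureTheory

theorem average_integral_correlation_two_transformations_general
    {X : Type*} [MeasurableSpace X] (μ : Measure X) [IsProbabilityMeasure μ]
    (T₁ T₂ : X ≃ᵐ X)
    (hT₁ : MeasurePreserving T₁ μ μ)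
    (hcomm : ∀ x, T₁ (T₂ x) = T₂ (T₁ x))
    (herg : Ergodic (⇑T₂ ∘ ⇑T₁.symm) μ)
    (f₁ f₂ : X → ℝ) (hf₁ : MemLp f₁ ⊤ μ) (hf₂ : MemLp f₂ ⊤ μ) :
    Tendsto
      (fun N : ℕ =>
        (N : ℝ)⁻¹ * ∑ n ∈ Finset.range N, ∫ x, f₁ ((⇑T₁)^[n] x) * f₂ ((⇑T₂)^[n] x) ∂μ)
      atTop (nhds ((∫ x, f₁ x ∂μ) * ∫ x, f₂ x ∂μ)) := by
  set S := ⇑T₂ ∘ ⇑T₁.symm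
  have hcorr (n : ℕ) : ∫ x, f₁ ((⇑T₁)^[n] x) * f₂ ((⇑T₂)^[n] x) ∂μ =
      ∫ x, f₁ x * f₂ (S^[n] x) ∂μ := by
    have hiter (x : X) : S^[n] ((⇑T₁)^[n] x) = (⇑T₂)^[n] x :=
      Equiv.iterate_comp_symm_iterate (e₁ := T₁.toEquiv) (e₂ := T₂.toEquiv) hcomm n x
    simp only [← hiter]
    exact (hT₁.iterate n).integral_comp (T₁.measurableEmbedding.iterate n)
      (fun y => f₁ y * f₂ (S^[n] y))
  simpa only [hcorr] using herg.tendsto_average_integral_mul_comp_iterate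
    (hf₁.mono_exponent le_top) (hf₂.mono_exponent le_top)

/-- If `T₁, T₂` are commuting invertible measure-preserving transformations of a probability
space such that `T₂ ∘ T₁⁻¹` is ergodic, and `f₁, f₂ ∈ L^∞`, then
`(1/N) ∑_{n<N} ∫ f₁(T₁ⁿ x) f₂(T₂ⁿ x) dμ → (∫ f₁ dμ)(∫ f₂ dμ)`. -/
theorem average_integral_correlation_two_transformations
    {X : Type*} [MeasurableSpace X] (μ : Measure X) [IsProbabilityMeasure μ]
    (T₁ T₂ : X ≃ᵐ X)
    (hT₁ : MeasurePreserving T₁ μ μ) (hT₂ : MeasurePreserving T₂ μ μ)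
    (hcomm : ∀ x, T₁ (T₂ x) = T₂ (T₁ x))
    (herg : Ergodic (⇑T₂ ∘ ⇑T₁.symm) μ)
    (f₁ f₂ : X → ℝ) (hf₁ : MemLp f₁ ⊤ μ) (hf₂ : MemLp f₂ ⊤ μ) :
    Tendsto
      (fun N : ℕ =>
        (N : ℝ)⁻¹ * ∑ n ∈ Finset.range N, ∫ x, f₁ ((⇑T₁)^[n] x) * f₂ ((⇑T₂)^[n] x) ∂μ)
      atTop (nhds ((∫ x, f₁ x ∂μ) * ∫ x, f₂ x ∂μ)) :=
  average_integral_correlation_two_transformations_general μ T₁ T₂ hT₁ hcomm herg f₁ f₂ hf₁ hf₂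
end
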